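/- For every a ∈ A, there exists an indispensable monomial of I_A of A-degree a (i.e. a is a quasi-indispensable A-degree of I_A) if and only if the fiber π^{-1}(a) has cardinality at least 2 and the graph G_a has an isolated vertex, i.e. there exists u ∈ π^{-1}(a) such that min(u,w) = 0 for every w ∈ π^{-1}(a) with w ≠ u. -/

import Mathlib

open MvPolynomial

/-- The monomial `X^u = ∏ i, X i ^ u i` in `k[X_1, …, X_r]`. -/
noncomputable def mon (k : Type*) [Field k] {r : ℕ} (u : Fin r → ℕ) :
    MvPolynomial (Fin r) k :=
  ∏ i, X i ^ u i

/-- `S` is a binomial generating set of `IA`: a set of pure-difference binomials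
`X^u - X^v` with `π u = π v` generating `IA` as an ideal. -/
def IsBinomGenSet (k : Type*) [Field k] {r : ℕ} {A : Type*} [AddCancelCommMonoid A]
    (π : (Fin r → ℕ) → A) (IA : Ideal (MvPolynomial (Fin r) k))
    (S : Set (MvPolynomial (Fin r) k)) : Prop :=
  (∀ f ∈ S, ∃ u v : Fin r → ℕ, π u = π v ∧ f = mon k u - mon k v) ∧ Ideal.span S = IA

/-- A minimal binomial generating set: no proper subset generates `IA`. -/
def IsMinBinomGenSet (k : Type*) [Field k] {r : ℕ} {A : Type*} [AddCancelCommMonoid A]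
    (π : (Fin r → ℕ) → A) (IA : Ideal (MvPolynomial (Fin r) k))
    (S : Set (MvPolynomial (Fin r) k)) : Prop :=
  IsBinomGenSet k π IA S ∧ ∀ T, T ⊂ S → Ideal.span T ≠ IA

/-- `f` is an indispensable binomial of `IA`: a binomial `X^u - X^v ∈ IA` with `u ≠ v`
such that every binomial generating set of `IA` contains `f` or `-f`. -/
def IsIndispBinomial (k : Type*) [Field k] {r : ℕ} {A : Type*} [AddCancelCommMonoid A]
    (π : (Fin r → ℕ) → A) (IA : Ideal (MvPolynomial (Fin r) k))
    (f : MvPolynomial (Fin r) k) : Prop :=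
  (∃ u v : Fin r → ℕ, u ≠ v ∧ π u = π v ∧ f = mon k u - mon k v) ∧ f ∈ IA ∧
    ∀ S, IsBinomGenSet k π IA S → f ∈ S ∨ -f ∈ S

/-- `X^u` is an indispensable monomial of `IA`: every binomial generating set of `IA`
contains a binomial `X^u - X^v` or `X^v - X^u` for some `v`. -/
def IsIndispMonomial (k : Type*) [Field k] {r : ℕ} {A : Type*} [AddCancelCommMonoid A]
    (π : (Fin r → ℕ) → A) (IA : Ideal (MvPolynomial (Fin r) k))
    (u : Fin r → ℕ) : Prop :=
  ∀ S, IsBinomGenSet k π IA S →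
    ∃ f ∈ S, ∃ v : Fin r → ℕ, f = mon k u - mon k v ∨ f = mon k v - mon k u

/-- `S` is an `A`-homogeneous generating set of `IA`: a set of `A`-homogeneous
polynomials generating `IA` as an ideal. -/
def IsHomogGenSet (k : Type*) [Field k] {r : ℕ} {A : Type*} [AddCancelCommMonoid A]
    (π : (Fin r → ℕ) → A) (IA : Ideal (MvPolynomial (Fin r) k))
    (S : Set (MvPolynomial (Fin r) k)) : Prop :=
  (∀ f ∈ S, ∃ b : A, ∀ d ∈ f.support, π ⇑d = b) ∧ Ideal.span S = IA

/-- A minimal `A`-homogeneous generating set: no proper subset generates `IA`. -/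
def IsMinHomogGenSet (k : Type*) [Field k] {r : ℕ} {A : Type*} [AddCancelCommMonoid A]
    (π : (Fin r → ℕ) → A) (IA : Ideal (MvPolynomial (Fin r) k))
    (S : Set (MvPolynomial (Fin r) k)) : Prop :=
  IsHomogGenSet k π IA S ∧ ∀ T, T ⊂ S → Ideal.span T ≠ IA

/-- `b` is an indispensable `A`-degree of `IA`: every binomial generating set of `IA`
contains a binomial both of whose monomials have `A`-degree `b`, and every minimal
binomial generating set contains exactly one such binomial. -/
def IsIndispDegree (k : Type*) [Field k] {r : ℕ} {A : Type*} [AddCancelCommMonoid A]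
    (π : (Fin r → ℕ) → A) (IA : Ideal (MvPolynomial (Fin r) k)) (b : A) : Prop :=
  (∀ S, IsBinomGenSet k π IA S →
    ∃ f ∈ S, ∃ u v : Fin r → ℕ, π u = b ∧ π v = b ∧ f = mon k u - mon k v) ∧
  ∀ S, IsMinBinomGenSet k π IA S →
    ∃! f, f ∈ S ∧ ∃ u v : Fin r → ℕ, π u = b ∧ π v = b ∧ f = mon k u - mon k v


/-!
If `w ≠ u` lies in the fiber of `u` and `m = min(u, w) ≠ 0`, then
`X^u - X^w = X^m (X^(u-m) - X^(w-m))` with `u - m ≠ u ≠ w - m` (the latter because the fibers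
are finite, so `π m ≠ 0`). Hence the binomials not involving `X^u` generate `I_A`, and they do
so trivially when `u` is alone in its fiber; then `X^u` is not indispensable.
Conversely, let `u` be isolated and `X^p - X^q ∈ I_A` with `p ≠ q`. If `p ≤ u`, then
`u - p + q` is a neighbour of `u` unless `p = u`. So a binomial generating set avoiding `X^u`
would lie in the monomial ideal spanned by the monomials not dividing `X^u`, which does not
contain `X^u - X^w`.
-/

section

variable {k : Type*} [Field k] {r : ℕ}

lemma mon_eq_monomial (u : Fin r → ℕ) :
    mon k u = monomial (Finsupp.equivFunOnFinite.symm u) 1 := by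
  rw [mon, ← prod_X_pow_eq_monomial]
  exact (Finset.prod_subset (Finset.subset_univ _) fun i _ hi => by simp_all).symm

lemma mon_add (u v : Fin r → ℕ) : mon k (u + v) = mon k u * mon k v := by
  simp only [mon, Pi.add_apply, pow_add, Finset.prod_mul_distrib]

lemma mon_injective : Function.Injective (mon k : (Fin r → ℕ) → MvPolynomial (Fin r) k) := by
  intro u v h
  simp only [mon_eq_monomial] at h
  exact Finsupp.equivFunOnFinite.symm.injective (monomial_left_injective one_ne_zero h)

lemma coeff_mon (u v : Fin r → ℕ) :
    coeff (Finsupp.equivFunOnFinite.symm u) (mon k v) = if v = u then 1 else 0 := by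
  simp [mon_eq_monomial, coeff_monomial]

lemma eq_or_eq_of_mon_sub_mon_eq {p q u v : Fin r → ℕ} (hpq : p ≠ q)
    (h : mon k p - mon k q = mon k u - mon k v ∨ mon k p - mon k q = mon k v - mon k u) :
    u = p ∨ u = q := by
  by_contra! hu
  -- compare the coefficients of `X^u`
  have hv : v = u := by
    rcases h with h | h <;> have := congrArg (coeff (Finsupp.equivFunOnFinite.symm u)) h <;>
      by_contra hvu <;> simp [coeff_mon, hu.1.symm, hu.2.symm, hvu] at this
  subst hv
  simp only [sub_self, or_self, sub_eq_zero] at h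
  exact hpq (mon_injective h)

lemma coeff_eq_zero_of_mem_span_mon_not_le {u : Fin r → ℕ} {f : MvPolynomial (Fin r) k}
    (hf : f ∈ Ideal.span (mon k '' {d | ¬ d ≤ u})) :
    coeff (Finsupp.equivFunOnFinite.symm u) f = 0 := by
  rw [_root_.funext mon_eq_monomial, ← Set.image_image (g := fun s => monomial s (1 : k)),
    mem_ideal_span_monomial_image] at hf
  by_contra h
  obtain ⟨_, ⟨d, hd, rfl⟩, hle⟩ := hf _ (mem_support_iff.mpr h)
  exact hd (Finsupp.coe_le_coe.mpr hle)

variable {A : Type*}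

def binomials (k : Type*) [Field k] (π : (Fin r → ℕ) → A) : Set (MvPolynomial (Fin r) k) :=
  {f | ∃ u v, π u = π v ∧ f = mon k u - mon k v}

def avoidingBinomials (k : Type*) [Field k] (π : (Fin r → ℕ) → A) (u : Fin r → ℕ) :
    Set (MvPolynomial (Fin r) k) :=
  {f | ∃ p q, π p = π q ∧ p ≠ q ∧ p ≠ u ∧ q ≠ u ∧ f = mon k p - mon k q}

lemma avoidingBinomials_subset (π : (Fin r → ℕ) → A) (u : Fin r → ℕ) :
    avoidingBinomials k π u ⊆ binomials k π := by
  rintro f ⟨p, q, hpq, -, -, -, rfl⟩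
  exact ⟨p, q, hpq, rfl⟩

lemma span_binomials_le {π : (Fin r → ℕ) → A} {u : Fin r → ℕ}
    {J : Ideal (MvPolynomial (Fin r) k)} (hJ : avoidingBinomials k π u ⊆ J)
    (hu : ∀ q, π q = π u → q ≠ u → mon k u - mon k q ∈ J) :
    Ideal.span (binomials k π) ≤ J := by
  rw [Ideal.span_le]
  rintro f ⟨p, q, hpq, rfl⟩
  obtain rfl | hne := eq_or_ne p q
  · simp
  obtain rfl | hp := eq_or_ne p u
  · exact hu q hpq.symm hne.symm
  obtain rfl | hq := eq_or_ne q u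
  · simpa using J.neg_mem (hu p hpq hp)
  · exact hJ ⟨p, q, hpq, hne, hp, hq, rfl⟩

variable [AddCancelCommMonoid A]

lemma not_isIndispMonomial_of_forall_mem_span {π : (Fin r → ℕ) → A} {u : Fin r → ℕ}
    (hu : ∀ q, π q = π u → q ≠ u →
      mon k u - mon k q ∈ Ideal.span (avoidingBinomials k π u)) :
    ¬ IsIndispMonomial k π (Ideal.span (binomials k π)) u := by
  intro hind
  have hgen : IsBinomGenSet k π (Ideal.span (binomials k π)) (avoidingBinomials k π u) :=
    ⟨avoidingBinomials_subset π u, le_antisymm (Ideal.span_mono (avoidingBinomials_subset π u))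
      (span_binomials_le Ideal.subset_span hu)⟩
  obtain ⟨f, ⟨p, q, -, hpq, hp, hq, rfl⟩, v, hfv⟩ := hind _ hgen
  rcases eq_or_eq_of_mon_sub_mon_eq hpq hfv with rfl | rfl
  exacts [hp rfl, hq rfl]

lemma exists_ne_of_isIndispMonomial {π : (Fin r → ℕ) → A} {u : Fin r → ℕ}
    (hu : IsIndispMonomial k π (Ideal.span (binomials k π)) u) :
    ∃ w, π w = π u ∧ w ≠ u := by
  by_contra! h
  exact not_isIndispMonomial_of_forall_mem_span (fun q hq hqu => absurd (h q hq) hqu) hu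

lemma eq_zero_of_map_eq_zero_of_finite (φ : (Fin r → ℕ) →+ A) (hfin : {v | φ v = 0}.Finite)
    {m : Fin r → ℕ} (hm : φ m = 0) : m = 0 := by
  by_contra hm0
  exact Set.infinite_of_injective_forall_mem
    (nsmul_left_strictMono (pos_iff_ne_zero.mpr hm0)).injective
    (fun n => show φ (n • m) = 0 by rw [map_nsmul, hm, nsmul_zero]) hfin

lemma isolated_of_isIndispMonomial (φ : (Fin r → ℕ) →+ A) (hfin : {v | φ v = 0}.Finite)
    {u : Fin r → ℕ} (hu : IsIndispMonomial k φ (Ideal.span (binomials k φ)) u) :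
    ∀ w, φ w = φ u → w ≠ u → ∀ i, min (u i) (w i) = 0 := by
  by_contra! h
  obtain ⟨w, hw, hwu, i, hi⟩ := h
  set m := u ⊓ w
  have hum : u - m + m = u := tsub_add_cancel_of_le inf_le_left
  have hwm : w - m + m = w := tsub_add_cancel_of_le inf_le_right
  have hm : φ m ≠ 0 := fun h => hi (congrFun (eq_zero_of_map_eq_zero_of_finite φ hfin h) i)
  have hdeg : φ (u - m) = φ (w - m) :=
    add_right_cancel (b := φ m) (by rw [← map_add, ← map_add, hum, hwm, hw])
  have hne : u - m ≠ w - m := fun h => hwu (by rw [← hwm, ← h, hum])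
  have hu_m : u - m ≠ u := fun h => hi (congrFun (add_eq_left.mp (by rwa [h] at hum)) i)
  have hw_m : w - m ≠ u := fun h => hm (add_left_cancel (a := φ (w - m)) (by
    rw [← map_add, hwm, hw, h, add_zero]))
  have huw : mon k u - mon k w ∈ Ideal.span (avoidingBinomials k φ u) := by
    have : mon k u - mon k w = (mon k (u - m) - mon k (w - m)) * mon k m := by
      rw [sub_mul, ← mon_add, ← mon_add, hum, hwm]
    rw [this]
    exact Ideal.mul_mem_right _ _ (Ideal.subset_span ⟨_, _, hdeg, hne, hu_m, hw_m, rfl⟩)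
  refine not_isIndispMonomial_of_forall_mem_span (fun q hq hqu => ?_) hu
  obtain rfl | hqw := eq_or_ne q w
  · exact huw
  rw [← sub_add_sub_cancel _ (mon k w)]
  exact Ideal.add_mem _ huw
    (Ideal.subset_span ⟨w, q, hw.trans hq.symm, hqw.symm, hwu, hqu, rfl⟩)

lemma eq_of_le_of_isolated (φ : (Fin r → ℕ) →+ A) {u p q : Fin r → ℕ}
    (hiso : ∀ w, φ w = φ u → w ≠ u → ∀ i, min (u i) (w i) = 0)
    (hpq : φ p = φ q) (hne : p ≠ q) (hle : p ≤ u) : p = u := by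
  have hup : u - p + p = u := tsub_add_cancel_of_le hle
  have hw : φ (u - p + q) = φ u := by rw [map_add, ← hpq, ← map_add, hup]
  have hwu : u - p + q ≠ u := fun h => hne (add_left_cancel (h.trans hup.symm)).symm
  funext i
  have hmin : min (u i) (u i - p i + q i) = 0 := hiso _ hw hwu i
  have hpi : p i ≤ u i := hle i
  omega

lemma isIndispMonomial_of_isolated (φ : (Fin r → ℕ) →+ A) {u w : Fin r → ℕ}
    (hw : φ w = φ u) (hwu : w ≠ u)
    (hiso : ∀ w, φ w = φ u → w ≠ u → ∀ i, min (u i) (w i) = 0) :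
    IsIndispMonomial k φ (Ideal.span (binomials k φ)) u := by
  intro S hS
  by_contra! hS_avoids
  have hle : Ideal.span (binomials k φ) ≤ Ideal.span (mon k '' {d | ¬ d ≤ u}) := by
    rw [← hS.2, Ideal.span_le]
    intro f hf
    obtain ⟨p, q, hpq, rfl⟩ := hS.1 f hf
    obtain rfl | hne := eq_or_ne p q
    · simp
    have hp : p ≠ u := by rintro rfl; exact (hS_avoids _ hf q).1 rfl
    have hq : q ≠ u := by rintro rfl; exact (hS_avoids _ hf p).2 rfl
    have hp' : ¬ p ≤ u := fun h => hp (eq_of_le_of_isolated φ hiso hpq hne h)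
    have hq' : ¬ q ≤ u := fun h => hq (eq_of_le_of_isolated φ hiso hpq.symm hne.symm h)
    exact Ideal.sub_mem _ (Ideal.subset_span ⟨p, hp', rfl⟩) (Ideal.subset_span ⟨q, hq', rfl⟩)
  have h0 := coeff_eq_zero_of_mem_span_mon_not_le (hle (Ideal.subset_span ⟨u, w, hw.symm, rfl⟩))
  simp [coeff_mon, hwu] at h0

end

theorem statement_6_general {k : Type*} [Field k] {r : ℕ}
    {A : Type*} [AddCancelCommMonoid A]
    (a : Fin r → A)
    (π : (Fin r → ℕ) → A) (hπ : ∀ u, π u = ∑ i, u i • a i)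
    (hfib : ∀ x : A, {u : Fin r → ℕ | π u = x}.Finite)
    (IA : Ideal (MvPolynomial (Fin r) k))
    (hIA : IA = Ideal.span {f | ∃ u v : Fin r → ℕ, π u = π v ∧ f = mon k u - mon k v})
    (b : A) :
    (∃ u : Fin r → ℕ, π u = b ∧ IsIndispMonomial k π IA u) ↔
      2 ≤ {w : Fin r → ℕ | π w = b}.ncard ∧
        ∃ u : Fin r → ℕ, π u = b ∧
          ∀ w : Fin r → ℕ, π w = b → w ≠ u → ∀ i, min (u i) (w i) = 0 := by
  obtain ⟨φ, rfl⟩ : ∃ φ : (Fin r → ℕ) →+ A, ⇑φ = π :=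
    ⟨{ toFun := π
       map_zero' := by simp [hπ]
       map_add' := fun u v => by simp [hπ, add_smul, Finset.sum_add_distrib] }, rfl⟩
  subst hIA
  constructor
  · rintro ⟨u, rfl, hu⟩
    obtain ⟨w, hw, hwu⟩ := exists_ne_of_isIndispMonomial hu
    exact ⟨(Set.one_lt_ncard_iff (hfib _)).mpr ⟨u, w, rfl, hw, hwu.symm⟩, u, rfl,
      isolated_of_isIndispMonomial φ (hfib 0) hu⟩
  · rintro ⟨hcard, u, rfl, hiso⟩
    obtain ⟨w, hw, hwu⟩ := Set.exists_ne_of_one_lt_ncard hcard u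
    exact ⟨u, rfl, isIndispMonomial_of_isolated φ hw hwu hiso⟩

/-- There is an indispensable monomial of `I_A` of `A`-degree `b` (i.e. `b` is a
quasi-indispensable `A`-degree) if and only if the fiber `π⁻¹(b)` has at least two
elements and the graph `G_b` has an isolated vertex. -/
theorem statement_6 {k : Type*} [Field k] {r : ℕ} (hr : 1 ≤ r)
    {A : Type*} [AddCancelCommMonoid A]
    (hred : ∀ x y : A, x + y = 0 → x = 0 ∧ y = 0)
    (a : Fin r → A) (ha : ∀ i, a i ≠ 0)
    (π : (Fin r → ℕ) → A) (hπ : ∀ u, π u = ∑ i, u i • a i)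
    (hgen : ∀ x : A, ∃ u, π u = x)
    (hfib : ∀ x : A, {u : Fin r → ℕ | π u = x}.Finite)
    (IA : Ideal (MvPolynomial (Fin r) k))
    (hIA : IA = Ideal.span {f | ∃ u v : Fin r → ℕ, π u = π v ∧ f = mon k u - mon k v})
    (b : A) :
    (∃ u : Fin r → ℕ, π u = b ∧ IsIndispMonomial k π IA u) ↔
      2 ≤ {w : Fin r → ℕ | π w = b}.ncard ∧
        ∃ u : Fin r → ℕ, π u = b ∧
          ∀ w : Fin r → ℕ, π w = b → w ≠ u → ∀ i, min (u i) (w i) = 0 :=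
  statement_6_general a π hπ hfib IA hIA b
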